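/- Let Y, r be reals, 0 < b < 1, e > 0, f > 0, g > 0, δ > 0. Consider the balanced-budget angel-daemon game with actions {T, G} for each player and utilities: u_ang(T,T) = Y - (f/g)·b·δ, u_dae(T,T) = -(r - (e/g)·b·δ); u_ang(T,G) = Y, u_dae(T,G) = -r; u_ang(G,T) = Y + (f/g)·δ·(1-b), u_dae(G,T) = -(r + (e/g)·δ·(1-b)); u_ang(G,G) = Y + (f/g)·δ, u_dae(G,G) = -(r + (e/g)·δ). Then the profile (G, T) (the angel plays G, the daemon plays T) is the unique pure Nash equilibrium of this game. -/

import Mathlib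

/-!
Whatever the daemon does, switching the angel from T to G raises income by exactly (f/g)·δ, so G
strictly dominates T. Against G the daemon gains (e/g)·b·δ by playing T rather than G, so its
unique best response is T.
-/

/-- Actions in the balanced-budget angel-daemon game: perturb taxes T or
government spending G. -/
inductive FiscalAct : Type
  | T : FiscalAct
  | G : FiscalAct

/-- Angel's utility (perturbed income) in the balanced-budget game; the first
action is the angel's and the second the daemon's. -/
noncomputable def balancedUang (Y b f g δ : ℝ) : FiscalAct → FiscalAct → ℝ
  | FiscalAct.T, FiscalAct.T => Y - (f / g) * (b * δ)
  | FiscalAct.T, FiscalAct.G => Y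
  | FiscalAct.G, FiscalAct.T => Y + (f / g) * (δ * (1 - b))
  | FiscalAct.G, FiscalAct.G => Y + (f / g) * δ

/-- Daemon's utility (minus the perturbed interest rate) in the
balanced-budget game. -/
noncomputable def balancedUdae (r b e g δ : ℝ) : FiscalAct → FiscalAct → ℝ
  | FiscalAct.T, FiscalAct.T => -(r - (e / g) * (b * δ))
  | FiscalAct.T, FiscalAct.G => -r
  | FiscalAct.G, FiscalAct.T => -(r + (e / g) * (δ * (1 - b)))
  | FiscalAct.G, FiscalAct.G => -(r + (e / g) * δ)

/-- (a, d) is a pure Nash equilibrium. -/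
def IsPNE {α β : Type*} (uang udae : α → β → ℝ) (a : α) (d : β) : Prop :=
  (∀ a' : α, uang a' d ≤ uang a d) ∧ (∀ d' : β, udae a d' ≤ udae a d)

theorem isPNE_iff_of_strictlyDominant {α β : Type*} {uang udae : α → β → ℝ} {a₀ : α} {d₀ : β}
    (hang : ∀ d, ∀ a ≠ a₀, uang a d < uang a₀ d) (hdae : ∀ d ≠ d₀, udae a₀ d < udae a₀ d₀)
    (a : α) (d : β) : IsPNE uang udae a d ↔ a = a₀ ∧ d = d₀ := by
  constructor
  · rintro ⟨hbestAng, hbestDae⟩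
    have ha : a = a₀ := by
      by_contra ha
      exact (hbestAng a₀).not_gt (hang d a ha)
    subst ha
    refine ⟨rfl, ?_⟩
    by_contra hd
    exact (hbestDae d₀).not_gt (hdae d hd)
  · rintro ⟨rfl, rfl⟩
    refine ⟨fun a' => ?_, fun d' => ?_⟩
    · rcases eq_or_ne a' a with rfl | ha'
      · exact le_rfl
      · exact (hang d a' ha').le
    · rcases eq_or_ne d' d with rfl | hd'
      · exact le_rfl
      · exact (hdae d' hd').le

theorem FiscalAct.eq_T_of_ne_G {a : FiscalAct} (ha : a ≠ FiscalAct.G) : a = FiscalAct.T := by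
  cases a
  · rfl
  · exact absurd rfl ha

theorem FiscalAct.eq_G_of_ne_T {a : FiscalAct} (ha : a ≠ FiscalAct.T) : a = FiscalAct.G := by
  cases a
  · exact absurd rfl ha
  · rfl

theorem balancedUang_G_sub_T (Y b f g δ : ℝ) (d : FiscalAct) :
    balancedUang Y b f g δ FiscalAct.G d - balancedUang Y b f g δ FiscalAct.T d = f / g * δ := by
  cases d <;> simp only [balancedUang] <;> ring

theorem balancedUdae_G_T_sub_G_G (r b e g δ : ℝ) :
    balancedUdae r b e g δ FiscalAct.G FiscalAct.T - balancedUdae r b e g δ FiscalAct.G FiscalAct.G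
      = e / g * (b * δ) := by
  simp only [balancedUdae]
  ring

theorem balanced_budget_unique_PNE_general
    (Y r b e f g δ : ℝ)
    (hb0 : 0 < b) (he : 0 < e) (hf : 0 < f) (hg : 0 < g)
    (hδ : 0 < δ) :
    ∀ a d : FiscalAct,
      IsPNE (balancedUang Y b f g δ) (balancedUdae r b e g δ) a d ↔
        (a = FiscalAct.G ∧ d = FiscalAct.T) := by
  have hang (d : FiscalAct) :
      balancedUang Y b f g δ FiscalAct.T d < balancedUang Y b f g δ FiscalAct.G d := by
    rw [← sub_pos, balancedUang_G_sub_T]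
    positivity
  have hdae : balancedUdae r b e g δ FiscalAct.G FiscalAct.G
      < balancedUdae r b e g δ FiscalAct.G FiscalAct.T := by
    rw [← sub_pos, balancedUdae_G_T_sub_G_G]
    positivity
  exact isPNE_iff_of_strictlyDominant
    (fun d a ha => FiscalAct.eq_T_of_ne_G ha ▸ hang d)
    (fun d hd => FiscalAct.eq_G_of_ne_T hd ▸ hdae)

/-- in the balanced-budget angel-daemon game the profile (G, T)
(angel plays G, daemon plays T) is the unique pure Nash equilibrium. -/
theorem balanced_budget_unique_PNE
    (Y r b e f g δ : ℝ)
    (hb0 : 0 < b) (hb1 : b < 1) (he : 0 < e) (hf : 0 < f) (hg : 0 < g)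
    (hδ : 0 < δ) :
    ∀ a d : FiscalAct,
      IsPNE (balancedUang Y b f g δ) (balancedUdae r b e g δ) a d ↔
        (a = FiscalAct.G ∧ d = FiscalAct.T) :=
  balanced_budget_unique_PNE_general Y r b e f g δ hb0 he hf hg hδ
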